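/- arXiv:2310.12853 — 8 statements merged into one kernel-verified Lean document; each statement's English description precedes it below -/
import Mathlib

section
/- The Horn matrix H (the 5×5 symmetric matrix with 1's on the diagonal and entries H_{ij} = 1 if |i-j| ≡ 1 (mod 5) and H_{ij} = -1 otherwise) is copositive, i.e., a^T H a ≥ 0 for all a ∈ ℝ^5 with nonnegative entries. -/
open MvPolynomial

def Horn : Matrix (Fin 5) (Fin 5) ℝ :=
  !![1,1,-1,-1,1; 1,1,1,-1,-1; -1,1,1,1,-1; -1,-1,1,1,1; 1,-1,-1,1,1]

theorem horn_copositive :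
    ∀ a : Fin 5 → ℝ, (∀ i, 0 ≤ a i) → 0 ≤ ∑ i, ∑ j, Horn i j * a i * a j := by
  intro a ha
  have h0 := ha 0; have h1 := ha 1; have h2 := ha 2; have h3 := ha 3; have h4 := ha 4
  simp only [Fin.sum_univ_five, Horn, Matrix.cons_val', Matrix.cons_val_zero,
    Matrix.cons_val_one, Matrix.head_cons, Matrix.empty_val', Matrix.cons_val_fin_one,
    Matrix.head_fin_const, Matrix.of_apply, Matrix.cons_val_succ, Matrix.cons_val_two, Matrix.cons_val_three, Matrix.cons_val_four, Matrix.head_cons, Matrix.tail_cons]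
  rcases le_total (a 2) (a 4) with h | h
  · nlinarith [sq_nonneg (a 0 + a 1 + a 2 - a 3 - a 4), mul_nonneg h2 h3,
      mul_nonneg h0 (sub_nonneg.2 h)]
  · nlinarith [sq_nonneg (a 0 + a 1 - a 2 - a 3 + a 4), mul_nonneg h3 h4,
      mul_nonneg h1 (sub_nonneg.2 h)]
end

section
/- For all positive reals d₁,...,d₅ satisfying d_{i-1} + d_{i+1} ≥ d_i for each i ∈ {1,...,5} (indices modulo 5), the polynomial (Σᵢ dᵢxᵢ²)·(x^{∘2})^T H x^{∘2} is a sum of squares, via the explicit identity: (Σᵢ dᵢxᵢ²)(x^{∘2})^T H x^{∘2} = d₁x₁²(x₁²+x₂²+x₅²-x₃²-x₄²)² + d₂x₂²(x₁²+x₂²+x₃²-x₄²-x₅²)² + d₃x₃²(x₂²+x₃²+x₄²-x₅²-x₁²)² + d₄x₄²(x₃²+x₄²+x₅²-x₁²-x₂²)² + d₅x₅²(x₁²+x₄²+x₅²-x₂²-x₃²)² + 4x₁²x₂²x₅²(d₅-d₁+d₂) + 4x₁²x₂²x₃²(d₃+d₁-d₂) + 4x₂²x₃²x₄²(d₄+d₂-d₃)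 + 4x₃²x₄²x₅²(d₅+d₃-d₄) + 4x₄²x₅²x₁²(d₁+d₄-d₅). -/
open MvPolynomial

def IsSOS {n : ℕ} (f : MvPolynomial (Fin n) ℝ) : Prop :=
  ∃ (m : ℕ) (p : Fin m → MvPolynomial (Fin n) ℝ), f = ∑ i, (p i) ^ 2

noncomputable def quartForm {n : ℕ} (M : Matrix (Fin n) (Fin n) ℝ) :
    MvPolynomial (Fin n) ℝ :=
  ∑ i, ∑ j, MvPolynomial.C (M i j) * X i ^ 2 * X j ^ 2

/-!
Every summand on the right of the identity is a square: a nonnegative constant times the square of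
a polynomial. The constants are the `dᵢ` and `4 (d_{i-1} + d_{i+1} - dᵢ)`, and the latter are
nonnegative exactly by the cyclic hypothesis.
-/

theorem isSOS_iff_isSumSq {n : ℕ} (f : MvPolynomial (Fin n) ℝ) : IsSOS f ↔ IsSumSq f := by
  constructor
  · rintro ⟨m, p, rfl⟩
    exact IsSumSq.sum_sq _ p
  · intro hf
    induction hf with
    | zero => exact ⟨0, Fin.elim0, by simp⟩
    | sq_add a _ ih =>
      obtain ⟨m, p, rfl⟩ := ih
      exact ⟨m + 1, Fin.cons a p, by simp [Fin.sum_univ_succ, sq]⟩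

theorem isSquare_C_mul_of_nonneg {σ : Type*} {a : ℝ} (ha : 0 ≤ a) {p : MvPolynomial σ ℝ}
    (hp : IsSquare p) : IsSquare (C a * p) := by
  obtain ⟨q, rfl⟩ := hp
  exact ⟨C √a * q, by rw [mul_mul_mul_comm, ← C_mul, Real.mul_self_sqrt ha]⟩

theorem weighted_quartForm_horn_eq (d : Fin 5 → ℝ) :
    (∑ i, C (d i) * X i ^ 2) * quartForm Horn =
      C (d 0) * X 0 ^ 2 * (X 0 ^ 2 + X 1 ^ 2 + X 4 ^ 2 - X 2 ^ 2 - X 3 ^ 2) ^ 2 +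
      C (d 1) * X 1 ^ 2 * (X 0 ^ 2 + X 1 ^ 2 + X 2 ^ 2 - X 3 ^ 2 - X 4 ^ 2) ^ 2 +
      C (d 2) * X 2 ^ 2 * (X 1 ^ 2 + X 2 ^ 2 + X 3 ^ 2 - X 4 ^ 2 - X 0 ^ 2) ^ 2 +
      C (d 3) * X 3 ^ 2 * (X 2 ^ 2 + X 3 ^ 2 + X 4 ^ 2 - X 0 ^ 2 - X 1 ^ 2) ^ 2 +
      C (d 4) * X 4 ^ 2 * (X 0 ^ 2 + X 3 ^ 2 + X 4 ^ 2 - X 1 ^ 2 - X 2 ^ 2) ^ 2 +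
      C (4 * (d 4 - d 0 + d 1)) * (X 0 ^ 2 * X 1 ^ 2 * X 4 ^ 2) +
      C (4 * (d 2 + d 0 - d 1)) * (X 0 ^ 2 * X 1 ^ 2 * X 2 ^ 2) +
      C (4 * (d 3 + d 1 - d 2)) * (X 1 ^ 2 * X 2 ^ 2 * X 3 ^ 2) +
      C (4 * (d 4 + d 2 - d 3)) * (X 2 ^ 2 * X 3 ^ 2 * X 4 ^ 2) +
      C (4 * (d 0 + d 3 - d 4)) * (X 3 ^ 2 * X 4 ^ 2 * X 0 ^ 2) := by
  simp only [quartForm, Horn, Fin.sum_univ_five, Matrix.of_apply, Matrix.cons_val',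
    Matrix.cons_val_zero, Matrix.cons_val_one, Matrix.cons_val_two, Matrix.cons_val_three,
    Matrix.cons_val_four, Matrix.head_cons, Matrix.tail_cons, Matrix.head_fin_const,
    Matrix.empty_val', Matrix.cons_val_fin_one, map_neg, map_one, map_add, map_sub, map_mul,
    map_ofNat]
  ring

theorem scaled_horn_sos_with_identity (d : Fin 5 → ℝ)
    (hpos : ∀ i, 0 < d i)
    (hcyc : ∀ i : Fin 5, d (i - 1) + d (i + 1) ≥ d i) :
    ((∑ i, C (d i) * X i ^ 2) * quartForm Horn =
      C (d 0) * X 0 ^ 2 * (X 0 ^ 2 + X 1 ^ 2 + X 4 ^ 2 - X 2 ^ 2 - X 3 ^ 2) ^ 2 +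
      C (d 1) * X 1 ^ 2 * (X 0 ^ 2 + X 1 ^ 2 + X 2 ^ 2 - X 3 ^ 2 - X 4 ^ 2) ^ 2 +
      C (d 2) * X 2 ^ 2 * (X 1 ^ 2 + X 2 ^ 2 + X 3 ^ 2 - X 4 ^ 2 - X 0 ^ 2) ^ 2 +
      C (d 3) * X 3 ^ 2 * (X 2 ^ 2 + X 3 ^ 2 + X 4 ^ 2 - X 0 ^ 2 - X 1 ^ 2) ^ 2 +
      C (d 4) * X 4 ^ 2 * (X 0 ^ 2 + X 3 ^ 2 + X 4 ^ 2 - X 1 ^ 2 - X 2 ^ 2) ^ 2 +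
      C (4 * (d 4 - d 0 + d 1)) * (X 0 ^ 2 * X 1 ^ 2 * X 4 ^ 2) +
      C (4 * (d 2 + d 0 - d 1)) * (X 0 ^ 2 * X 1 ^ 2 * X 2 ^ 2) +
      C (4 * (d 3 + d 1 - d 2)) * (X 1 ^ 2 * X 2 ^ 2 * X 3 ^ 2) +
      C (4 * (d 4 + d 2 - d 3)) * (X 2 ^ 2 * X 3 ^ 2 * X 4 ^ 2) +
      C (4 * (d 0 + d 3 - d 4)) * (X 3 ^ 2 * X 4 ^ 2 * X 0 ^ 2)) ∧
    IsSOS ((∑ i, C (d i) * X i ^ 2) * quartForm Horn) := by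
  refine ⟨weighted_quartForm_horn_eq d, ?_⟩
  have h0 : d 4 + d 1 ≥ d 0 := hcyc 0
  have h1 : d 0 + d 2 ≥ d 1 := hcyc 1
  have h2 : d 1 + d 3 ≥ d 2 := hcyc 2
  have h3 : d 2 + d 4 ≥ d 3 := hcyc 3
  have h4 : d 3 + d 0 ≥ d 4 := hcyc 4
  rw [isSOS_iff_isSumSq, weighted_quartForm_horn_eq]
  simp only [mul_assoc, ← mul_pow]
  iterate 9 refine IsSumSq.add ?_ (IsSquare.isSumSq ?_)
  refine IsSquare.isSumSq ?_
  all_goals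
    refine isSquare_C_mul_of_nonneg ?_ (.sq _)
    first | exact (hpos _).le | linarith
end

section
/- Let M be a quadratic module of ℝ[x₁,...,xₙ]. Then M is Archimedean (i.e., M + ℤ = ℝ[x]) if and only if there exists N ∈ ℕ such that N - Σᵢ xᵢ² ∈ M. -/
open MvPolynomial

def IsQuadraticModule {n : ℕ} (M : Set (MvPolynomial (Fin n) ℝ)) : Prop :=
  1 ∈ M ∧ (∀ p ∈ M, ∀ q ∈ M, p + q ∈ M) ∧
    (∀ σ : MvPolynomial (Fin n) ℝ, IsSOS σ → ∀ p ∈ M, σ * p ∈ M)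

def IsArchimedean {n : ℕ} (M : Set (MvPolynomial (Fin n) ℝ)) : Prop :=
  ∀ p : MvPolynomial (Fin n) ℝ, ∃ k : ℤ, (k : MvPolynomial (Fin n) ℝ) + p ∈ M

namespace ArchAux

variable {n : ℕ} {M : Set (MvPolynomial (Fin n) ℝ)}

lemma sq_isSOS (p : MvPolynomial (Fin n) ℝ) : IsSOS (p ^ 2) :=
  ⟨1, fun _ => p, by simp⟩

lemma constC_isSOS {c : ℝ} (hc : 0 ≤ c) : IsSOS (C c : MvPolynomial (Fin n) ℝ) :=
  ⟨1, fun _ => C (Real.sqrt c), by simp [← map_pow, Real.sq_sqrt hc]⟩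

lemma const_mem (hM : IsQuadraticModule M) {c : ℝ} (hc : 0 ≤ c) : C c ∈ M := by
  simpa using hM.2.2 (C c) (constC_isSOS hc) 1 hM.1

lemma sos_mem (hM : IsQuadraticModule M) {σ : MvPolynomial (Fin n) ℝ} (hσ : IsSOS σ) : σ ∈ M := by
  simpa using hM.2.2 σ hσ 1 hM.1

lemma smul_mem (hM : IsQuadraticModule M) {c : ℝ} (hc : 0 ≤ c) {p} (hp : p ∈ M) :
    C c * p ∈ M := hM.2.2 _ (constC_isSOS hc) p hp

/-- the "bounded" predicate -/
def Bdd (M : Set (MvPolynomial (Fin n) ℝ)) (p : MvPolynomial (Fin n) ℝ) : Prop :=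
  ∃ c : ℝ, C c - p ∈ M ∧ C c + p ∈ M

lemma Bdd.mono (hM : IsQuadraticModule M) {p} (h : Bdd M p) {d : ℝ}
    (hd : ∀ c, C c - p ∈ M → C c + p ∈ M → c ≤ d) :
    C d - p ∈ M ∧ C d + p ∈ M := by
  obtain ⟨c, h1, h2⟩ := h
  have hcd : c ≤ d := hd c h1 h2
  have hnn : (0:ℝ) ≤ d - c := by linarith
  constructor
  · have := hM.2.1 _ (const_mem hM hnn) _ h1
    have e : C (d - c) + (C c - p) = C d - p := by rw [map_sub]; ring
    rwa [e] at this
  · have := hM.2.1 _ (const_mem hM hnn) _ h2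
    have e : C (d - c) + (C c + p) = C d + p := by rw [map_sub]; ring
    rwa [e] at this

lemma Bdd.le (hM : IsQuadraticModule M) {p} {c d : ℝ} (hcd : c ≤ d)
    (h1 : C c - p ∈ M) (h2 : C c + p ∈ M) : C d - p ∈ M ∧ C d + p ∈ M := by
  have hnn : (0:ℝ) ≤ d - c := by linarith
  constructor
  · have := hM.2.1 _ (const_mem hM hnn) _ h1
    have e : C (d - c) + (C c - p) = C d - p := by rw [map_sub]; ring
    rwa [e] at this
  · have := hM.2.1 _ (const_mem hM hnn) _ h2
    have e : C (d - c) + (C c + p) = C d + p := by rw [map_sub]; ring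
    rwa [e] at this

lemma Bdd.neg (h : Bdd M p) : Bdd M (-p) := by
  obtain ⟨c, h1, h2⟩ := h
  exact ⟨c, by simpa [sub_neg_eq_add] using h2, by simpa [← sub_eq_add_neg] using h1⟩

lemma Bdd.add (hM : IsQuadraticModule M) {p q} (hp : Bdd M p) (hq : Bdd M q) :
    Bdd M (p + q) := by
  obtain ⟨c, h1, h2⟩ := hp
  obtain ⟨d, g1, g2⟩ := hq
  refine ⟨c + d, ?_, ?_⟩
  · have := hM.2.1 _ h1 _ g1
    have e : (C c - p) + (C d - q) = C (c + d) - (p + q) := by rw [map_add]; ring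
    rwa [e] at this
  · have := hM.2.1 _ h2 _ g2
    have e : (C c + p) + (C d + q) = C (c + d) + (p + q) := by rw [map_add]; ring
    rwa [e] at this

lemma Bdd.smul_nonneg (hM : IsQuadraticModule M) {p} {a : ℝ} (ha : 0 ≤ a) (hp : Bdd M p) :
    Bdd M (C a * p) := by
  obtain ⟨c, h1, h2⟩ := hp
  refine ⟨a * c, ?_, ?_⟩
  · have := smul_mem hM ha h1
    have e : C a * (C c - p) = C (a * c) - C a * p := by rw [map_mul]; ring
    rwa [e] at this
  · have := smul_mem hM ha h2
    have e : C a * (C c + p) = C (a * c) + C a * p := by rw [map_mul]; ring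
    rwa [e] at this

lemma Bdd.smul (hM : IsQuadraticModule M) {p} (a : ℝ) (hp : Bdd M p) :
    Bdd M (C a * p) := by
  rcases le_or_gt 0 a with ha | ha
  · exact hp.smul_nonneg hM ha
  · have : Bdd M (C (-a) * (-p)) := (hp.neg).smul_nonneg hM (by linarith)
    simpa [map_neg] using this

lemma Bdd.const (hM : IsQuadraticModule M) (a : ℝ) : Bdd M (MvPolynomial.C a) := by
  refine ⟨|a|, ?_, ?_⟩
  · have h : MvPolynomial.C (|a| - a) ∈ M := const_mem hM (by linarith [le_abs_self a])
    rwa [map_sub] at h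
  · have h : MvPolynomial.C (|a| + a) ∈ M := const_mem hM (by linarith [neg_abs_le a])
    rwa [map_add] at h

lemma Bdd.sq (hM : IsQuadraticModule M) {p} (hp : Bdd M p) : Bdd M (p ^ 2) := by
  obtain ⟨c₀, h1₀, h2₀⟩ := hp
  obtain ⟨h1, h2⟩ := Bdd.le hM (le_max_left c₀ 1) h1₀ h2₀
  set c := max c₀ 1 with hc
  have hcpos : (0:ℝ) < c := lt_of_lt_of_le one_pos (le_max_right _ _)
  -- 2c (c² - p²) = (c+p)²(c-p) + (c-p)²(c+p)
  have t1 : (MvPolynomial.C c + p) ^ 2 * (MvPolynomial.C c - p) ∈ M :=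
    hM.2.2 _ (sq_isSOS _) _ h1
  have t2 : (MvPolynomial.C c - p) ^ 2 * (MvPolynomial.C c + p) ∈ M :=
    hM.2.2 _ (sq_isSOS _) _ h2
  have tsum := hM.2.1 _ t1 _ t2
  have hmul := smul_mem hM (le_of_lt (by positivity : (0:ℝ) < 1 / (2 * c))) tsum
  have key : MvPolynomial.C (1 / (2 * c)) *
      ((MvPolynomial.C c + p) ^ 2 * (MvPolynomial.C c - p) +
        (MvPolynomial.C c - p) ^ 2 * (MvPolynomial.C c + p)) =
      MvPolynomial.C (c ^ 2) - p ^ 2 := by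
    have e1 : (MvPolynomial.C c + p) ^ 2 * (MvPolynomial.C c - p) +
        (MvPolynomial.C c - p) ^ 2 * (MvPolynomial.C c + p) =
        (2 * MvPolynomial.C c) * ((MvPolynomial.C c) ^ 2 - p ^ 2) := by ring
    rw [e1, ← mul_assoc]
    have e2 : (MvPolynomial.C (1 / (2 * c)) : MvPolynomial (Fin n) ℝ) * (2 * MvPolynomial.C c) = 1 := by
      rw [show (2 : MvPolynomial (Fin n) ℝ) = MvPolynomial.C 2 by rw [map_ofNat], ← mul_assoc,
        ← map_mul, ← map_mul]
      rw [show 1 / (2 * c) * 2 * c = 1 by field_simp]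
      simp
    rw [e2, one_mul, ← map_pow]
  rw [key] at hmul
  refine ⟨c ^ 2, hmul, ?_⟩
  have hsq : p ^ 2 ∈ M := sos_mem hM (sq_isSOS p)
  have hc2 : MvPolynomial.C (c ^ 2) ∈ M := const_mem hM (by positivity)
  exact hM.2.1 _ hc2 _ hsq

lemma Bdd.mul (hM : IsQuadraticModule M) {p q} (hp : Bdd M p) (hq : Bdd M q) :
    Bdd M (p * q) := by
  have h1 : Bdd M ((p + q) ^ 2) := (hp.add hM hq).sq hM
  have h2 : Bdd M (-(p ^ 2)) := (hp.sq hM).neg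
  have h3 : Bdd M (-(q ^ 2)) := (hq.sq hM).neg
  have h4 : Bdd M ((p + q) ^ 2 + -(p ^ 2) + -(q ^ 2)) := (h1.add hM h2).add hM h3
  have h5 := h4.smul hM (1 / 2)
  have e : MvPolynomial.C (1 / 2 : ℝ) * ((p + q) ^ 2 + -(p ^ 2) + -(q ^ 2)) = p * q := by
    have h2 : (MvPolynomial.C (1 / 2 : ℝ) : MvPolynomial (Fin n) ℝ) * 2 = 1 := by
      rw [show (2 : MvPolynomial (Fin n) ℝ) = MvPolynomial.C 2 by rw [map_ofNat], ← map_mul]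
      norm_num
    have e1 : ((p + q) ^ 2 + -(p ^ 2) + -(q ^ 2)) = 2 * (p * q) := by ring
    rw [e1, ← mul_assoc, h2, one_mul]
  rwa [e] at h5

lemma chalf : (MvPolynomial.C (1 / 2 : ℝ) : MvPolynomial (Fin n) ℝ) * 2 = 1 := by
  rw [show (2 : MvPolynomial (Fin n) ℝ) = MvPolynomial.C 2 by rw [map_ofNat], ← map_mul]
  norm_num

lemma Bdd.Xvar (hM : IsQuadraticModule M) {N : ℕ}
    (hN : (N : MvPolynomial (Fin n) ℝ) - ∑ i, X i ^ 2 ∈ M) (i : Fin n) :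
    Bdd M (X i) := by
  have hN' : MvPolynomial.C ((N : ℝ)) - ∑ j, X j ^ 2 ∈ M := by rwa [map_natCast]
  -- N - X i ^ 2 ∈ M
  have hσ : IsSOS (∑ j, (if j = i then 0 else X j : MvPolynomial (Fin n) ℝ) ^ 2) :=
    ⟨n, fun j => if j = i then 0 else X j, rfl⟩
  have hσM : (∑ j, (if j = i then 0 else X j : MvPolynomial (Fin n) ℝ) ^ 2) ∈ M :=
    sos_mem hM hσ
  have hsum := hM.2.1 _ hN' _ hσM
  have esum : (MvPolynomial.C ((N : ℝ)) - ∑ j, X j ^ 2) +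
      ∑ j, (if j = i then 0 else X j : MvPolynomial (Fin n) ℝ) ^ 2 =
      MvPolynomial.C ((N : ℝ)) - X i ^ 2 := by
    have e1 : ∀ j, (if j = i then 0 else X j : MvPolynomial (Fin n) ℝ) ^ 2 =
        X j ^ 2 - (if j = i then X j ^ 2 else 0) := by
      intro j; split_ifs <;> simp
    rw [Finset.sum_congr rfl fun j _ => e1 j, Finset.sum_sub_distrib,
      Finset.sum_ite_eq' Finset.univ i (fun j => X j ^ 2)]
    simp
  rw [esum] at hsum
  -- half trick
  have hp : (X i + 1 : MvPolynomial (Fin n) ℝ) ^ 2 ∈ M := sos_mem hM (sq_isSOS _)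
  have hm : (X i - 1 : MvPolynomial (Fin n) ℝ) ^ 2 ∈ M := sos_mem hM (sq_isSOS _)
  have half_nonneg : (0:ℝ) ≤ 1 / 2 := by norm_num
  have g1 := smul_mem hM half_nonneg (hM.2.1 _ hp _ hsum)
  have g2 := smul_mem hM half_nonneg (hM.2.1 _ hm _ hsum)
  refine ⟨((N : ℝ) + 1) / 2, ?_, ?_⟩
  · have e : MvPolynomial.C (1 / 2 : ℝ) *
        ((X i - 1) ^ 2 + (MvPolynomial.C ((N : ℝ)) - X i ^ 2)) =
        MvPolynomial.C (((N : ℝ) + 1) / 2) - X i := by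
      rw [show ((N:ℝ) + 1) / 2 = (1/2) * ((N:ℝ) + 1) by ring, map_mul, map_add, map_one]
      linear_combination (-(X i : MvPolynomial (Fin n) ℝ)) * chalf
    rwa [e] at g2
  · have e : MvPolynomial.C (1 / 2 : ℝ) *
        ((X i + 1) ^ 2 + (MvPolynomial.C ((N : ℝ)) - X i ^ 2)) =
        MvPolynomial.C (((N : ℝ) + 1) / 2) + X i := by
      rw [show ((N:ℝ) + 1) / 2 = (1/2) * ((N:ℝ) + 1) by ring, map_mul, map_add, map_one]
      linear_combination (X i : MvPolynomial (Fin n) ℝ) * chalf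
    rwa [e] at g1

end ArchAux

theorem archimedean_iff {n : ℕ} (M : Set (MvPolynomial (Fin n) ℝ))
    (hM : IsQuadraticModule M) :
    IsArchimedean M ↔
      ∃ N : ℕ, (N : MvPolynomial (Fin n) ℝ) - ∑ i, X i ^ 2 ∈ M := by
  constructor
  · intro h
    obtain ⟨k, hk⟩ := h (-(∑ i, X i ^ 2))
    refine ⟨k.toNat, ?_⟩
    have hnn : (0:ℝ) ≤ ((k.toNat : ℕ) : ℝ) - (k : ℝ) := by
      have := Int.self_le_toNat k
      exact_mod_cast sub_nonneg.mpr (by exact_mod_cast this)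
    have hmem := hM.2.1 _ (ArchAux.const_mem hM hnn) _ hk
    have e : MvPolynomial.C (((k.toNat : ℕ) : ℝ) - (k : ℝ)) +
        ((k : MvPolynomial (Fin n) ℝ) + -(∑ i, X i ^ 2)) =
        ((k.toNat : ℕ) : MvPolynomial (Fin n) ℝ) - ∑ i, X i ^ 2 := by
      rw [map_sub, map_natCast, map_intCast]; ring
    rwa [e] at hmem
  · rintro ⟨N, hN⟩ p
    have key : ∀ q : MvPolynomial (Fin n) ℝ, ArchAux.Bdd M q := by
      intro q
      induction q using MvPolynomial.induction_on with
      | C a => exact ArchAux.Bdd.const hM a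
      | add p q hp hq => exact hp.add hM hq
      | mul_X p i hp => exact hp.mul hM (ArchAux.Bdd.Xvar hM hN i)
    obtain ⟨c, _, h2⟩ := key p
    refine ⟨⌈c⌉, ?_⟩
    have hnn : (0:ℝ) ≤ ((⌈c⌉ : ℤ) : ℝ) - c := sub_nonneg.mpr (Int.le_ceil c)
    have hmem := hM.2.1 _ (ArchAux.const_mem hM hnn) _ h2
    have e : MvPolynomial.C (((⌈c⌉ : ℤ) : ℝ) - c) + (MvPolynomial.C c + p) =
        ((⌈c⌉ : ℤ) : MvPolynomial (Fin n) ℝ) + p := by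
      rw [map_sub, map_intCast]; ring
    rwa [e] at hmem
end

section
/- For every even-degree form p ∈ ℝ[x₁,...,xₙ], the following are equivalent: (a) there exists r ∈ ℕ₀ such that (Σᵢ xᵢ²)^r · p is a sum of squares of polynomials; (b) p belongs to Σ + ℝ[x]·(1 - Σᵢ xᵢ²), where Σ is the set of sums of squares. -/
/-!
Write `s = ∑ xᵢ²`. The substitution `x ↦ x / √s` kills `1 - s` and sends a form `p` of degree
`2e` to `p / sᵉ`, so `p = σ + g (1 - s)` becomes `p / sᵉ = σ(x / √s)`. Algebraically this
substitution is a ring map into `R[1/s][√s]`; the `1`-component (in the basis `1, √s`) of a sum of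
squares there is a sum of terms `a² + s b²` with `a, b ∈ R[1/s]`. Clearing the denominators, which
are powers of `s`, gives `sʳ p ∈ Σ` because `s` is itself a sum of squares. Conversely,
`sʳ ≡ 1` modulo `1 - s`.
-/

open MvPolynomial

theorem IsSumSq.isSOS {n : ℕ} {f : MvPolynomial (Fin n) ℝ} (hf : IsSumSq f) : IsSOS f := by
  induction hf with
  | zero => exact ⟨0, ![], by simp⟩
  | sq_add a _ ih =>
    obtain ⟨m, q, rfl⟩ := ih
    exact ⟨m + 1, Fin.cons a q, by simp [Fin.sum_univ_succ, sq]⟩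

theorem MvPolynomial.IsHomogeneous.eval₂_mul_const {R S σ : Type*} [CommSemiring R]
    [CommSemiring S] {φ : MvPolynomial σ R} {d : ℕ} (hφ : φ.IsHomogeneous d) (f : R →+* S)
    (g : σ → S) (c : S) :
    MvPolynomial.eval₂ f (fun i => g i * c) φ = c ^ d * MvPolynomial.eval₂ f g φ := by
  simp only [eval₂_eq, Finset.mul_sum]
  refine Finset.sum_congr rfl fun u hu => ?_
  have hu : ∑ i ∈ u.support, u i = d := by
    simp [← hφ (mem_support_iff.mp hu), Finsupp.weight_apply, Finsupp.sum]
  simp only [mul_pow, Finset.prod_mul_distrib, Finset.prod_pow_eq_pow_sum, hu]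
  ring

theorem QuadraticAlgebra.re_sum_sq {R ι : Type*} [CommRing R] {a b : R} (s : Finset ι)
    (z : ι → QuadraticAlgebra R a b) :
    (∑ i ∈ s, z i ^ 2).re = ∑ i ∈ s, ((z i).re ^ 2 + a * (z i).im ^ 2) := by
  induction s using Finset.cons_induction with
  | empty => simp
  | cons i s hi ih =>
    rw [Finset.sum_cons, Finset.sum_cons, re_add, ih, sq, re_mul]
    ring

open QuadraticAlgebra in
theorem MvPolynomial.exists_algebraMap_eq_pow_mul_sum_sq_add_mul_sq_of_sub_mem_span
    {k σ ι : Type*} [CommRing k] [Fintype ι] {s p : MvPolynomial σ k} {e : ℕ}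
    (hs : s.IsHomogeneous 2) (hp : p.IsHomogeneous (2 * e)) (q : ι → MvPolynomial σ k)
    (hpq : p - ∑ i, q i ^ 2 ∈ Ideal.span {1 - s}) :
    ∃ a b : ι → Localization.Away s, algebraMap _ _ p =
      algebraMap _ _ s ^ e * ∑ i, (a i ^ 2 + algebraMap _ _ s * b i ^ 2) := by
  set L := Localization.Away s
  set S : L := algebraMap _ L s
  set t : L := IsLocalization.Away.invSelf s
  have hSt : S * t = 1 := IsLocalization.Away.mul_invSelf s
  let ι' : MvPolynomial σ k →+* QuadraticAlgebra L S 0 :=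
    (algebraMap L _).comp (algebraMap _ L)
  -- `ω = √s`, so `u = 1 / √s`
  set u : QuadraticAlgebra L S 0 := ω * algebraMap L _ t
  have hu : u ^ 2 = algebraMap L _ t := by
    rw [mul_pow, sq, omega_mul_omega_eq_algebraMap]
    simp only [map_zero, zero_mul, add_zero, ← map_pow, ← map_mul]
    rw [sq, ← mul_assoc, hSt, one_mul]
  let Φ := eval₂Hom (ι'.comp C) (fun i => ι' (X i) * u)
  have hΦ {φ : MvPolynomial σ k} {d : ℕ} (hφ : φ.IsHomogeneous d) :
      Φ φ = u ^ d * ι' φ := by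
    rw [coe_eval₂Hom, hφ.eval₂_mul_const, ← Function.comp_def, ← eval₂_comp_left, eval₂_eta]
  have hΦs : Φ s = 1 := by
    rw [hΦ hs, hu]
    change algebraMap L _ t * algebraMap L _ S = 1
    rw [← map_mul, mul_comm, hSt, map_one]
  have hΦp : Φ p = ∑ i, Φ (q i) ^ 2 := by
    obtain ⟨h, hh⟩ := Ideal.mem_span_singleton'.mp hpq
    have := congrArg Φ hh
    simp only [map_mul, map_sub, map_one, hΦs, sub_self, mul_zero, map_sum, map_pow] at this
    exact sub_eq_zero.mp this.symm
  refine ⟨fun i => (Φ (q i)).re, fun i => (Φ (q i)).im, ?_⟩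
  have hre := congrArg re hΦp
  rw [hΦ hp, pow_mul, hu, re_sum_sq] at hre
  simp only [ι', RingHom.comp_apply, ← map_pow, ← map_mul, algebraMap_re] at hre
  rw [← hre, ← mul_assoc, ← mul_pow, hSt, one_pow, one_mul]

theorem IsLocalization.Away.exists_pow_mul_eq_mul_sum_sq_add_mul_sq {R L ι : Type*} [CommRing R]
    [CommRing L] [Algebra R L] [Fintype ι] {s : R} [IsLocalization.Away s L] {x y : R}
    {a b : ι → L}
    (h : algebraMap R L x = algebraMap R L y * ∑ i, (a i ^ 2 + algebraMap R L s * b i ^ 2)) :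
    ∃ (r : ℕ) (α β : ι → R), s ^ r * x = y * ∑ i, (α i ^ 2 + s * β i ^ 2) := by
  obtain ⟨⟨_, M, rfl⟩, hM⟩ :=
    IsLocalization.exist_integer_multiples_of_finite (Submonoid.powers s) (Sum.elim a b)
  choose c hc using hM
  have hcleared : algebraMap R L (s ^ (2 * M) * x) =
      algebraMap R L (y * ∑ i, (c (.inl i) ^ 2 + s * c (.inr i) ^ 2)) := by
    simp only [map_mul, map_pow, map_sum, map_add, h, hc, Sum.elim_inl, Sum.elim_inr,
      Algebra.smul_def, Finset.mul_sum]
    exact Finset.sum_congr rfl fun i _ => by ring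
  obtain ⟨N, hN⟩ := IsLocalization.Away.exists_of_eq s hcleared
  refine ⟨2 * N + 2 * M, fun i => s ^ N * c (.inl i), fun i => s ^ N * c (.inr i), ?_⟩
  have hsum : ∑ i, ((s ^ N * c (.inl i)) ^ 2 + s * (s ^ N * c (.inr i)) ^ 2) =
      s ^ (2 * N) * ∑ i, (c (.inl i) ^ 2 + s * c (.inr i) ^ 2) := by
    rw [Finset.mul_sum]
    exact Finset.sum_congr rfl fun i _ => by ring
  rw [hsum]
  linear_combination s ^ N * hN

theorem MvPolynomial.exists_isSumSq_pow_mul_of_sub_mem_span {k σ ι : Type*} [CommRing k]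
    [Fintype ι] {s p : MvPolynomial σ k} {e : ℕ} (hs : s.IsHomogeneous 2) (hs' : IsSumSq s)
    (hp : p.IsHomogeneous (2 * e)) (q : ι → MvPolynomial σ k)
    (hpq : p - ∑ i, q i ^ 2 ∈ Ideal.span {1 - s}) :
    ∃ r, IsSumSq (s ^ r * p) := by
  obtain ⟨a, b, h⟩ :=
    exists_algebraMap_eq_pow_mul_sum_sq_add_mul_sq_of_sub_mem_span hs hp q hpq
  obtain ⟨r, α, β, hr⟩ := IsLocalization.Away.exists_pow_mul_eq_mul_sum_sq_add_mul_sq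
    (s := s) (x := p) (y := s ^ e) (by rw [h, map_pow])
  refine ⟨r, hr ▸ IsSumSq.mul ?_ (IsSumSq.sum fun i _ => .add ?_ (hs'.mul ?_))⟩
  · simpa using pow_mem (Subsemiring.mem_sumSq.mpr hs') e
  all_goals simp [sq]

theorem reznick_iff_sphere_module {n d : ℕ} (p : MvPolynomial (Fin n) ℝ)
    (hp : p.IsHomogeneous d) (hd : Even d) :
    (∃ r : ℕ, IsSOS ((∑ i, X i ^ 2) ^ r * p)) ↔
      ∃ σ g : MvPolynomial (Fin n) ℝ, IsSOS σ ∧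
        g ∈ Ideal.span {(1 : MvPolynomial (Fin n) ℝ) - ∑ i, X i ^ 2} ∧
        p = σ + g := by
  set s : MvPolynomial (Fin n) ℝ := ∑ i, X i ^ 2
  constructor
  · rintro ⟨r, hr⟩
    refine ⟨s ^ r * p, (1 - s ^ r) * p, hr, Ideal.mul_mem_right _ _ ?_, by ring⟩
    simpa using Ideal.mem_span_singleton.mpr (sub_dvd_pow_sub_pow 1 s r)
  · rintro ⟨_, g, ⟨m, q, rfl⟩, hg, rfl⟩
    obtain ⟨e, rfl⟩ := even_iff_two_dvd.mp hd
    have hs : s.IsHomogeneous 2 := IsHomogeneous.sum _ _ _ fun i _ => isHomogeneous_X_pow i 2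
    obtain ⟨r, hr⟩ := exists_isSumSq_pow_mul_of_sub_mem_span hs (IsSumSq.sum_sq _ _) hp q
      (by rwa [add_sub_cancel_left])
    exact ⟨r, hr.isSOS⟩
end

section
/- Let M be an Archimedean quadratic module of ℝ[x₁,...,xₙ] and u ∈ ℝ[x] with uM ⊆ M. Then the set J := {p ∈ ℝ[x] | there exists ε > 0 such that u + εp ∈ M and u - εp ∈ M} is an ideal of ℝ[x]. -/
open MvPolynomial

namespace StableAux

variable {n : ℕ} {M : Set (MvPolynomial (Fin n) ℝ)}

lemma sos_sq (f : MvPolynomial (Fin n) ℝ) : IsSOS (f ^ 2) :=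
  ⟨1, ![f], by simp⟩

lemma sos_C {r : ℝ} (hr : 0 ≤ r) : IsSOS (C r : MvPolynomial (Fin n) ℝ) :=
  ⟨1, ![C (Real.sqrt r)], by simp [← map_pow, Real.sq_sqrt hr]⟩

lemma qm_add (hM : IsQuadraticModule M) {p q : MvPolynomial (Fin n) ℝ}
    (hp : p ∈ M) (hq : q ∈ M) : p + q ∈ M := hM.2.1 p hp q hq

lemma qm_sq_mul (hM : IsQuadraticModule M) (f : MvPolynomial (Fin n) ℝ)
    {m : MvPolynomial (Fin n) ℝ} (hm : m ∈ M) : f ^ 2 * m ∈ M :=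
  hM.2.2 _ (sos_sq f) m hm

lemma qm_smul (hM : IsQuadraticModule M) {r : ℝ} (hr : 0 ≤ r)
    {m : MvPolynomial (Fin n) ℝ} (hm : m ∈ M) : C r * m ∈ M :=
  hM.2.2 _ (sos_C hr) m hm

lemma qm_C (hM : IsQuadraticModule M) {r : ℝ} (hr : 0 ≤ r) :
    (C r : MvPolynomial (Fin n) ℝ) ∈ M := by
  simpa using qm_smul hM hr hM.1

lemma qm_sq (hM : IsQuadraticModule M) (f : MvPolynomial (Fin n) ℝ) :
    f ^ 2 ∈ M := by simpa using qm_sq_mul hM f hM.1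

/-- boundedness w.r.t. M -/
def Bdd (M : Set (MvPolynomial (Fin n) ℝ)) (f : MvPolynomial (Fin n) ℝ) : Prop :=
  ∃ c : ℝ, 0 < c ∧ C c - f ∈ M ∧ C c + f ∈ M

lemma bdd_C (hM : IsQuadraticModule M) (r : ℝ) : Bdd M (C r) := by
  refine ⟨|r| + 1, by positivity, ?_, ?_⟩
  · have : (C (|r| + 1) - C r : MvPolynomial (Fin n) ℝ) = C (|r| + 1 - r) := by
      rw [map_sub]
    rw [this]
    exact qm_C hM (by cases abs_cases r with
      | inl h => linarith [h.1] | inr h => linarith [h.1, abs_nonneg r])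
  · have : (C (|r| + 1) + C r : MvPolynomial (Fin n) ℝ) = C (|r| + 1 + r) := by
      simp only [C_add]
    rw [this]
    exact qm_C hM (by cases abs_cases r with
      | inl h => linarith [h.1] | inr h => linarith [h.1, abs_nonneg r])

lemma bdd_neg {f : MvPolynomial (Fin n) ℝ} (hf : Bdd M f) : Bdd M (-f) := by
  obtain ⟨c, hc, h1, h2⟩ := hf
  exact ⟨c, hc, by simpa [sub_neg_eq_add] using h2, by simpa [← sub_eq_add_neg] using h1⟩

lemma bdd_add (hM : IsQuadraticModule M) {f g : MvPolynomial (Fin n) ℝ}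
    (hf : Bdd M f) (hg : Bdd M g) : Bdd M (f + g) := by
  obtain ⟨c, hc, h1, h2⟩ := hf
  obtain ⟨d, hd, h3, h4⟩ := hg
  refine ⟨c + d, by positivity, ?_, ?_⟩
  · have e : (C (c + d) - (f + g) : MvPolynomial (Fin n) ℝ)
        = (C c - f) + (C d - g) := by rw [map_add]; ring
    rw [e]; exact qm_add hM h1 h3
  · have e : (C (c + d) + (f + g) : MvPolynomial (Fin n) ℝ)
        = (C c + f) + (C d + g) := by rw [map_add]; ring
    rw [e]; exact qm_add hM h2 h4

lemma bdd_sq (hM : IsQuadraticModule M) {f : MvPolynomial (Fin n) ℝ}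
    (hf : Bdd M f) : Bdd M (f ^ 2) := by
  obtain ⟨c, hc, h1, h2⟩ := hf
  refine ⟨c ^ 2, by positivity, ?_, qm_add hM (qm_C hM (by positivity)) (qm_sq hM f)⟩
  have hA : (C c + f) ^ 2 * (C c - f) ∈ M := qm_sq_mul hM _ h1
  have hB : (C c - f) ^ 2 * (C c + f) ∈ M := qm_sq_mul hM _ h2
  have hS := qm_add hM hA hB
  have hmem : C (1 / (2 * c)) *
      ((C c + f) ^ 2 * (C c - f) + (C c - f) ^ 2 * (C c + f)) ∈ M :=
    qm_smul hM (by positivity) hS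
  have key : C (1 / (2 * c)) *
      ((C c + f) ^ 2 * (C c - f) + (C c - f) ^ 2 * (C c + f))
      = C (c ^ 2) - f ^ 2 := by
    have e1 : ((C c + f) ^ 2 * (C c - f) + (C c - f) ^ 2 * (C c + f)
        : MvPolynomial (Fin n) ℝ) = C (2 * c) * (C (c ^ 2) - f ^ 2) := by
      simp only [map_mul, map_pow, map_ofNat]
      ring
    rw [e1, ← mul_assoc, ← map_mul]
    have : 1 / (2 * c) * (2 * c) = 1 := by field_simp
    rw [this, map_one, one_mul]
  rwa [key] at hmem

lemma bdd_mul (hM : IsQuadraticModule M) {f g : MvPolynomial (Fin n) ℝ}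
    (hf : Bdd M f) (hg : Bdd M g) : Bdd M (f * g) := by
  obtain ⟨c, hc, h1, -⟩ := bdd_sq hM (bdd_add hM hf hg)
  obtain ⟨d, hd, h3, -⟩ := bdd_sq hM (bdd_add hM hf (bdd_neg hg))
  have hfg : f + -g = f - g := by ring
  rw [hfg] at h3
  refine ⟨(c + d) / 4, by positivity, ?_, ?_⟩
  · have hmem : C ((1:ℝ)/4) * ((C c - (f + g) ^ 2) + ((f - g) ^ 2 + C d)) ∈ M :=
      qm_smul hM (by norm_num)
        (qm_add hM h1 (qm_add hM (qm_sq hM (f - g)) (qm_C hM hd.le)))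
    have e : C ((1:ℝ)/4) * ((C c - (f + g) ^ 2) + ((f - g) ^ 2 + C d))
        = C ((c + d) / 4) - f * g := by
      have h4 : ((c : ℝ) + d) / 4 = (1/4) * (c + d) := by ring
      have hq : (C ((1:ℝ)/4) : MvPolynomial (Fin n) ℝ) * 4 = 1 := by
        rw [show ((4 : MvPolynomial (Fin n) ℝ)) = C (4 : ℝ) from (map_ofNat C 4).symm,
          ← map_mul]
        norm_num
      rw [h4, C_mul, C_add]
      linear_combination (-(f * g)) * hq
    rwa [e] at hmem
  · have hmem : C ((1:ℝ)/4) * ((C d - (f - g) ^ 2) + ((f + g) ^ 2 + C c)) ∈ M :=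
      qm_smul hM (by norm_num)
        (qm_add hM h3 (qm_add hM (qm_sq hM (f + g)) (qm_C hM hc.le)))
    have e : C ((1:ℝ)/4) * ((C d - (f - g) ^ 2) + ((f + g) ^ 2 + C c))
        = C ((c + d) / 4) + f * g := by
      have h4 : ((c : ℝ) + d) / 4 = (1/4) * (c + d) := by ring
      have hq : (C ((1:ℝ)/4) : MvPolynomial (Fin n) ℝ) * 4 = 1 := by
        rw [show ((4 : MvPolynomial (Fin n) ℝ)) = C (4 : ℝ) from (map_ofNat C 4).symm,
          ← map_mul]
        norm_num
      rw [h4, C_mul, C_add]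
      linear_combination (f * g) * hq
    rwa [e] at hmem

lemma bdd_X (hM : IsQuadraticModule M)
    (hArch : ∃ N : ℕ, (N : MvPolynomial (Fin n) ℝ) - ∑ i, X i ^ 2 ∈ M)
    (i : Fin n) : Bdd M (X i) := by
  classical
  obtain ⟨N, hN⟩ := hArch
  have hσ : IsSOS (∑ j, (fun j => if j = i then 0 else X j) j ^ 2) :=
    ⟨n, _, rfl⟩
  have hs : (∑ j, (if j = i then (0 : MvPolynomial (Fin n) ℝ) else X j) ^ 2) ∈ M := by
    simpa using hM.2.2 _ hσ 1 hM.1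
  have hsum : (∑ j, (if j = i then (0 : MvPolynomial (Fin n) ℝ) else X j) ^ 2)
      = (∑ j, X j ^ 2) - X i ^ 2 := by
    rw [eq_sub_iff_add_eq,
      ← Finset.sum_erase_add _ _ (Finset.mem_univ i),
      ← Finset.sum_erase_add _ (fun j => (X j : MvPolynomial (Fin n) ℝ) ^ 2)
        (Finset.mem_univ i)]
    rw [Finset.sum_congr rfl
      (fun j hj => by rw [if_neg (Finset.ne_of_mem_erase hj)])]
    simp
  rw [hsum] at hs
  have hXi : C ((N : ℝ)) - X i ^ 2 ∈ M := by
    have h := qm_add hM hN hs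
    have e : ((N : MvPolynomial (Fin n) ℝ) - ∑ j, X j ^ 2)
        + ((∑ j, X j ^ 2) - X i ^ 2) = C ((N : ℝ)) - X i ^ 2 := by
      rw [map_natCast]; ring
    rwa [e] at h
  refine ⟨((N : ℝ) + 2) / 2, by positivity, ?_, ?_⟩
  · have hmem : C ((1:ℝ)/2) * ((C ((N : ℝ)) - X i ^ 2) + ((X i - 1) ^ 2 + 1)) ∈ M :=
      qm_smul hM (by norm_num)
        (qm_add hM hXi (qm_add hM (qm_sq hM (X i - 1)) hM.1))
    have e : C ((1:ℝ)/2) * ((C ((N : ℝ)) - X i ^ 2) + ((X i - 1) ^ 2 + 1))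
        = C (((N : ℝ) + 2) / 2) - X i := by
      have h4 : ((N : ℝ) + 2) / 2 = (1/2) * ((N : ℝ) + 1 + 1) := by ring
      have hq : (C ((1:ℝ)/2) : MvPolynomial (Fin n) ℝ) * 2 = 1 := by
        rw [show ((2 : MvPolynomial (Fin n) ℝ)) = C (2 : ℝ) from (map_ofNat C 2).symm,
          ← map_mul]
        norm_num
      rw [h4, C_mul, C_add, C_add, C_1]
      linear_combination (-(X i : MvPolynomial (Fin n) ℝ)) * hq
    rwa [e] at hmem
  · have hmem : C ((1:ℝ)/2) * ((C ((N : ℝ)) - X i ^ 2) + ((X i + 1) ^ 2 + 1)) ∈ M :=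
      qm_smul hM (by norm_num)
        (qm_add hM hXi (qm_add hM (qm_sq hM (X i + 1)) hM.1))
    have e : C ((1:ℝ)/2) * ((C ((N : ℝ)) - X i ^ 2) + ((X i + 1) ^ 2 + 1))
        = C (((N : ℝ) + 2) / 2) + X i := by
      have h4 : ((N : ℝ) + 2) / 2 = (1/2) * ((N : ℝ) + 1 + 1) := by ring
      have hq : (C ((1:ℝ)/2) : MvPolynomial (Fin n) ℝ) * 2 = 1 := by
        rw [show ((2 : MvPolynomial (Fin n) ℝ)) = C (2 : ℝ) from (map_ofNat C 2).symm,
          ← map_mul]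
        norm_num
      rw [h4, C_mul, C_add, C_add, C_1]
      linear_combination (X i : MvPolynomial (Fin n) ℝ) * hq
    rwa [e] at hmem

lemma bdd_all (hM : IsQuadraticModule M)
    (hArch : ∃ N : ℕ, (N : MvPolynomial (Fin n) ℝ) - ∑ i, X i ^ 2 ∈ M)
    (f : MvPolynomial (Fin n) ℝ) : Bdd M f := by
  induction f using MvPolynomial.induction_on with
  | C a => exact bdd_C hM a
  | add p q hp hq => exact bdd_add hM hp hq
  | mul_X p i hp => exact bdd_mul hM hp (bdd_X hM hArch i)

lemma shrink (hM : IsQuadraticModule M) {u p : MvPolynomial (Fin n) ℝ}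
    (hu : u ∈ M) {ε δ : ℝ} (hδ : 0 < δ) (hε : 0 < ε) (hδε : δ ≤ ε)
    (h : u + C ε * p ∈ M) : u + C δ * p ∈ M := by
  have e1 : (δ / ε) * ε = δ := div_mul_cancel₀ _ (ne_of_gt hε)
  have key : u + C δ * p = C (δ/ε) * (u + C ε * p) + C (1 - δ/ε) * u := by
    rw [show (C δ : MvPolynomial (Fin n) ℝ) = C (δ/ε) * C ε from by
      rw [← map_mul, e1], map_sub, map_one]
    ring
  rw [key]
  exact qm_add hM (qm_smul hM (by positivity) h)
    (qm_smul hM (sub_nonneg.mpr ((div_le_one hε).mpr hδε)) hu)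

end StableAux

open StableAux in
theorem stable_set_is_ideal {n : ℕ} (M : Set (MvPolynomial (Fin n) ℝ))
    (hM : IsQuadraticModule M)
    (hArch : ∃ N : ℕ, (N : MvPolynomial (Fin n) ℝ) - ∑ i, X i ^ 2 ∈ M)
    (u : MvPolynomial (Fin n) ℝ) (huM : ∀ p ∈ M, u * p ∈ M) :
    ∃ J : Ideal (MvPolynomial (Fin n) ℝ),
      (J : Set (MvPolynomial (Fin n) ℝ)) =
        {p | ∃ ε : ℝ, 0 < ε ∧ u + C ε * p ∈ M ∧ u - C ε * p ∈ M} := by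
  have hu : u ∈ M := by simpa using huM 1 hM.1
  refine ⟨{ carrier := {p | ∃ ε : ℝ, 0 < ε ∧ u + C ε * p ∈ M ∧ u - C ε * p ∈ M},
            add_mem' := ?_, zero_mem' := ?_, smul_mem' := ?_ }, rfl⟩
  · -- additivity
    rintro a b ⟨ε₁, hε₁, ha1, ha2⟩ ⟨ε₂, hε₂, hb1, hb2⟩
    set δ := min ε₁ ε₂ with hδdef
    have hδ : 0 < δ := lt_min hε₁ hε₂
    have ha1' : u + C δ * a ∈ M := shrink hM hu hδ hε₁ (min_le_left _ _) ha1
    have hb1' : u + C δ * b ∈ M := shrink hM hu hδ hε₂ (min_le_right _ _) hb1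
    have ha2' : u + C δ * (-a) ∈ M := by
      have : u + C ε₁ * (-a) ∈ M := by
        simpa [mul_neg, ← sub_eq_add_neg] using ha2
      exact shrink hM hu hδ hε₁ (min_le_left _ _) this
    have hb2' : u + C δ * (-b) ∈ M := by
      have : u + C ε₂ * (-b) ∈ M := by
        simpa [mul_neg, ← sub_eq_add_neg] using hb2
      exact shrink hM hu hδ hε₂ (min_le_right _ _) this
    have h2 : (C ((1:ℝ)/2) : MvPolynomial (Fin n) ℝ) * 2 = 1 := by
      rw [show ((2 : MvPolynomial (Fin n) ℝ)) = C (2 : ℝ) from (map_ofNat C 2).symm,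
        ← map_mul]
      norm_num
    have hhalf : (δ : ℝ) / 2 = (1/2) * δ := by ring
    refine ⟨δ/2, by positivity, ?_, ?_⟩
    · have hmem : C ((1:ℝ)/2) * ((u + C δ * a) + (u + C δ * b)) ∈ M :=
        qm_smul hM (by norm_num) (qm_add hM ha1' hb1')
      have e : C ((1:ℝ)/2) * ((u + C δ * a) + (u + C δ * b))
          = u + C (δ/2) * (a + b) := by
        rw [hhalf, C_mul]
        linear_combination u * h2
      rwa [e] at hmem
    · have hmem : C ((1:ℝ)/2) * ((u + C δ * (-a)) + (u + C δ * (-b))) ∈ M :=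
        qm_smul hM (by norm_num) (qm_add hM ha2' hb2')
      have e : C ((1:ℝ)/2) * ((u + C δ * (-a)) + (u + C δ * (-b)))
          = u - C (δ/2) * (a + b) := by
        rw [hhalf, C_mul]
        linear_combination u * h2
      rwa [e] at hmem
  · -- zero
    exact ⟨1, one_pos, by simpa using hu, by simpa using hu⟩
  · -- stability under multiplication
    rintro f a ⟨ε, hε, h1, h2⟩
    obtain ⟨c, hc, hcb, -⟩ := bdd_sq hM (bdd_all hM hArch f)
    set t : ℝ := 1 / (2 * (c + 1)) with ht
    have htpos : 0 < t := by positivity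
    have hg : (1 : MvPolynomial (Fin n) ℝ) - C (2*t) * (f^2 + 1) ∈ M := by
      have h0 : (2 : ℝ) * t * (c + 1) = 1 := by
        rw [ht]; field_simp
      have e : (1 : MvPolynomial (Fin n) ℝ) - C (2*t) * (f^2 + 1)
          = C (2*t) * (C c - f^2) + C (1 - 2*t*(c+1)) := by
        simp only [map_sub, map_one, C_mul, C_add, map_ofNat]
        ring
      rw [e]
      exact qm_add hM (qm_smul hM (by positivity) hcb)
        (qm_C hM (by rw [h0]; norm_num))
    have hA : (f+1)^2 * (u + C ε * a) + (f-1)^2 * (u - C ε * a) ∈ M :=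
      qm_add hM (qm_sq_mul hM _ h1) (qm_sq_mul hM _ h2)
    have hB : (f-1)^2 * (u + C ε * a) + (f+1)^2 * (u - C ε * a) ∈ M :=
      qm_add hM (qm_sq_mul hM _ h1) (qm_sq_mul hM _ h2)
    refine ⟨4*t*ε, by positivity, ?_, ?_⟩
    · have hmem : C t * ((f+1)^2 * (u + C ε * a) + (f-1)^2 * (u - C ε * a))
          + u * ((1 : MvPolynomial (Fin n) ℝ) - C (2*t) * (f^2 + 1)) ∈ M :=
        qm_add hM (qm_smul hM htpos.le hA) (huM _ hg)
      have e : C t * ((f+1)^2 * (u + C ε * a) + (f-1)^2 * (u - C ε * a))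
          + u * ((1 : MvPolynomial (Fin n) ℝ) - C (2*t) * (f^2 + 1))
          = u + C (4*t*ε) * (f • a) := by
        simp only [smul_eq_mul, C_mul, map_ofNat]
        ring
      rwa [e] at hmem
    · have hmem : C t * ((f-1)^2 * (u + C ε * a) + (f+1)^2 * (u - C ε * a))
          + u * ((1 : MvPolynomial (Fin n) ℝ) - C (2*t) * (f^2 + 1)) ∈ M :=
        qm_add hM (qm_smul hM htpos.le hB) (huM _ hg)
      have e : C t * ((f-1)^2 * (u + C ε * a) + (f+1)^2 * (u - C ε * a))
          + u * ((1 : MvPolynomial (Fin n) ℝ) - C (2*t) * (f^2 + 1))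
          = u - C (4*t*ε) * (f • a) := by
        simp only [smul_eq_mul, C_mul, map_ofNat]
        ring
      rwa [e] at hmem
end

section
/- Let I be an ideal and M a quadratic module of ℝ[x₁,...,xₙ] with uM ⊆ M for some u ∈ I, let a ∈ ℝⁿ, and let φ be a test state on I for M at a with respect to u (i.e., φ: I → ℝ linear, φ(M∩I) ⊆ ℝ_{≥0}, φ(u) = 1, and φ(pq) = p(a)φ(q) for all p ∈ ℝ[x], q ∈ I). Then p(a) ≥ 0 for all p ∈ M; in particular a ∈ S(M), and f(a) = 0 for all f ∈ M ∩ (-M). -/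
open MvPolynomial

theorem test_state_support {n : ℕ} (I : Ideal (MvPolynomial (Fin n) ℝ))
    (M : Set (MvPolynomial (Fin n) ℝ)) (hM : IsQuadraticModule M)
    (u : MvPolynomial (Fin n) ℝ) (huI : u ∈ I) (huM : ∀ p ∈ M, u * p ∈ M)
    (a : Fin n → ℝ) (φ : I →ₗ[ℝ] ℝ)
    (hpos : ∀ q (hq : q ∈ I), q ∈ M → 0 ≤ φ ⟨q, hq⟩)
    (hunit : φ ⟨u, huI⟩ = 1)
    (hmul : ∀ (p : MvPolynomial (Fin n) ℝ) (q : MvPolynomial (Fin n) ℝ)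
      (hq : q ∈ I), φ ⟨p * q, I.mul_mem_left p hq⟩ = eval a p * φ ⟨q, hq⟩) :
    (∀ p ∈ M, 0 ≤ eval a p) ∧
      (∀ f : MvPolynomial (Fin n) ℝ, f ∈ M → -f ∈ M → eval a f = 0) := by
  have key : ∀ p ∈ M, 0 ≤ eval a p := by
    intro p hp
    have hmem : p * u ∈ M := by rw [mul_comm]; exact huM p hp
    have h1 : 0 ≤ φ ⟨p * u, I.mul_mem_left p huI⟩ :=
      hpos (p * u) (I.mul_mem_left p huI) hmem
    rw [hmul p u huI, hunit, mul_one] at h1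
    exact h1
  refine ⟨key, fun f hf hnf => ?_⟩
  have h1 := key f hf
  have h2 := key (-f) hnf
  rw [map_neg] at h2
  linarith
end

section
/- Let G = ([n], E) be a graph with stability number α = α(G) ≥ 1, and let G ⊕ (n+1) be the graph obtained by adding an isolated vertex n+1 (so α(G⊕(n+1)) = α+1). Then in ℝ[x₁,...,x_{n+1}] the identity f_{G⊕(n+1)} = g² + ((α+1)/α)·f_G holds, where g := √α·x_{n+1}² - (1/√α)(x₁² + ... + xₙ²). -/
open MvPolynomial

def IsStable {n : ℕ} (G : SimpleGraph (Fin n)) (S : Finset (Fin n)) : Prop :=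
  ∀ i ∈ S, ∀ j ∈ S, ¬ G.Adj i j

def IsStabilityNumber {n : ℕ} (G : SimpleGraph (Fin n)) (α : ℕ) : Prop :=
  (∃ S : Finset (Fin n), IsStable G S ∧ S.card = α) ∧
    ∀ S : Finset (Fin n), IsStable G S → S.card ≤ α

/-- The graph matrix `t(A_G + I) - J` with parameter `t`. -/
def graphMatrix {n : ℕ} (G : SimpleGraph (Fin n)) [DecidableRel G.Adj] (t : ℝ) :
    Matrix (Fin n) (Fin n) ℝ :=
  fun i j => t * ((if G.Adj i j then 1 else 0) + (if i = j then 1 else 0)) - 1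

/-- The adjacency matrix of `G ⊕ (n+1)`: `G` with one isolated vertex added. -/
def extAdj {n : ℕ} (G : SimpleGraph (Fin n)) [DecidableRel G.Adj] :
    Matrix (Fin (n + 1)) (Fin (n + 1)) ℝ :=
  fun i j =>
    if h : (i : ℕ) < n ∧ (j : ℕ) < n then
      (if G.Adj ⟨i, h.1⟩ ⟨j, h.2⟩ then 1 else 0) else 0

lemma double_sum_sq {ι σ : Type*} [Fintype ι] (p : ι → MvPolynomial σ ℝ) :
    ∑ i, ∑ j, p i * p j = (∑ i, p i) ^ 2 := by
  rw [sq, Finset.sum_mul_sum]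

theorem graph_poly_isolated_vertex_identity {n : ℕ} (G : SimpleGraph (Fin n))
    [DecidableRel G.Adj] (α : ℕ) (hα : IsStabilityNumber G α) (hα1 : 1 ≤ α) :
    (∑ i : Fin (n + 1), ∑ j : Fin (n + 1),
        C (((α : ℝ) + 1) * (extAdj G i j + (if i = j then 1 else 0)) - 1) *
          X i ^ 2 * X j ^ 2)
      =
    (C (Real.sqrt α) * X (Fin.last n) ^ 2 -
        C (1 / Real.sqrt α) * ∑ i : Fin n, X (Fin.castSucc i) ^ 2) ^ 2 +
      C (((α : ℝ) + 1) / α) *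
        (∑ i : Fin n, ∑ j : Fin n,
          C (graphMatrix G (α : ℝ) i j) * X (Fin.castSucc i) ^ 2 * X (Fin.castSucc j) ^ 2) := by
  have ha : (0:ℝ) < (α:ℝ) := by exact_mod_cast hα1
  have hane : (α:ℝ) ≠ 0 := ne_of_gt ha
  have hs0 : Real.sqrt (α:ℝ) ≠ 0 := ne_of_gt (Real.sqrt_pos.mpr ha)
  set L : MvPolynomial (Fin (n+1)) ℝ := X (Fin.last n) with hLdef
  set S : MvPolynomial (Fin (n+1)) ℝ := ∑ i : Fin n, X (Fin.castSucc i) ^ 2 with hSdef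
  set D : MvPolynomial (Fin (n+1)) ℝ := ∑ i : Fin n, ∑ j : Fin n,
      C ((if G.Adj i j then (1:ℝ) else 0) + if i = j then 1 else 0) *
        X (Fin.castSucc i) ^ 2 * X (Fin.castSucc j) ^ 2 with hDdef
  -- adjacency+identity sum over the extended graph
  have hE : (∑ i : Fin (n+1), ∑ j : Fin (n+1),
      C (extAdj G i j + (if i = j then (1:ℝ) else 0)) * X i ^ 2 * X j ^ 2)
      = D + L ^ 4 := by
    rw [Fin.sum_univ_castSucc]
    congr 1
    · rw [hDdef]
      refine Finset.sum_congr rfl fun i _ => ?_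
      rw [Fin.sum_univ_castSucc]
      have hz : extAdj G i.castSucc (Fin.last n) + (if i.castSucc = Fin.last n then (1:ℝ) else 0) = 0 := by
        simp [extAdj, Fin.ne_of_lt (Fin.castSucc_lt_last i)]
      rw [hz, map_zero, zero_mul, zero_mul, add_zero]
      refine Finset.sum_congr rfl fun j _ => ?_
      have h1 : extAdj G i.castSucc j.castSucc = if G.Adj i j then (1:ℝ) else 0 := by
        simp [extAdj]
      rw [h1]
      simp only [Fin.castSucc_inj]
    · rw [Fin.sum_univ_castSucc]
      have hz : ∀ j : Fin n, extAdj G (Fin.last n) j.castSucc + (if Fin.last n = j.castSucc then (1:ℝ) else 0) = 0 := by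
        intro j
        simp [extAdj, (Fin.ne_of_lt (Fin.castSucc_lt_last j)).symm]
      have hfin : extAdj G (Fin.last n) (Fin.last n) + (if (Fin.last n : Fin (n+1)) = Fin.last n then (1:ℝ) else 0) = 1 := by
        simp [extAdj]
      rw [Finset.sum_eq_zero fun j _ => by rw [hz j, map_zero, zero_mul, zero_mul], zero_add,
        hfin, map_one, one_mul]
      ring
  -- squares sums
  have hT : (∑ x : Fin (n+1), (X x ^ 2 : MvPolynomial (Fin (n+1)) ℝ) * ∑ i : Fin (n+1), X i ^ 2)
      = (S + L ^ 2) ^ 2 := by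
    rw [← Finset.sum_mul, ← sq, Fin.sum_univ_castSucc]
  have hSS : (∑ x : Fin n, (X (Fin.castSucc x) ^ 2 : MvPolynomial (Fin (n+1)) ℝ) *
      ∑ i : Fin n, X (Fin.castSucc i) ^ 2) = S ^ 2 := by
    rw [← Finset.sum_mul, ← sq]
  -- LHS reduction
  have hLHS : (∑ i : Fin (n + 1), ∑ j : Fin (n + 1),
        C (((α : ℝ) + 1) * (extAdj G i j + (if i = j then 1 else 0)) - 1) *
          X i ^ 2 * X j ^ 2)
      = C ((α:ℝ) + 1) * (D + L ^ 4) - (S + L ^ 2) ^ 2 := by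
    have : ∀ (i j : Fin (n+1)),
        C (((α : ℝ) + 1) * (extAdj G i j + (if i = j then 1 else 0)) - 1) *
          X i ^ 2 * X j ^ 2
        = C ((α:ℝ)+1) * (C (extAdj G i j + (if i = j then (1:ℝ) else 0)) * X i ^ 2 * X j ^ 2)
          - X i ^ 2 * X j ^ 2 := by
      intro i j
      rw [map_sub, map_mul, C_1]
      ring
    simp only [this, Finset.sum_sub_distrib, ← Finset.mul_sum]
    rw [hE, hT]
  -- RHS inner reduction
  have hRin : (∑ i : Fin n, ∑ j : Fin n,
        C (graphMatrix G (α : ℝ) i j) * X (Fin.castSucc i) ^ 2 * X (Fin.castSucc j) ^ 2)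
      = C (α:ℝ) * D - S ^ 2 := by
    have : ∀ (i j : Fin n),
        C (graphMatrix G (α : ℝ) i j) * X (Fin.castSucc i) ^ 2 * X (Fin.castSucc j) ^ 2
        = C (α:ℝ) * (C ((if G.Adj i j then (1:ℝ) else 0) + if i = j then 1 else 0) *
            X (Fin.castSucc i) ^ 2 * X (Fin.castSucc j) ^ 2)
          - X (Fin.castSucc i) ^ 2 * X (Fin.castSucc j) ^ 2 := by
      intro i j
      rw [graphMatrix, map_sub, map_mul, C_1]
      ring
    simp only [this, Finset.sum_sub_distrib, ← Finset.mul_sum]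
    rw [← hDdef, hSS]
  rw [hLHS, hRin]
  -- constants
  have hc1 : (C ((α:ℝ) + 1) : MvPolynomial (Fin (n+1)) ℝ) = C (((α:ℝ)+1)/(α:ℝ)) * C (α:ℝ) := by
    rw [← C_mul, div_mul_cancel₀ _ hane]
  have hc2 : (C (Real.sqrt (α:ℝ)) : MvPolynomial (Fin (n+1)) ℝ) ^ 2 = C (α:ℝ) := by
    rw [← C_pow, Real.sq_sqrt ha.le]
  have hc3 : (C (Real.sqrt (α:ℝ)) : MvPolynomial (Fin (n+1)) ℝ) * C (1 / Real.sqrt (α:ℝ)) = 1 := by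
    rw [← C_mul, mul_one_div, div_self hs0, C_1]
  have hc4 : (C (((α:ℝ)+1)/(α:ℝ)) : MvPolynomial (Fin (n+1)) ℝ)
      = C (1 / Real.sqrt (α:ℝ)) ^ 2 + 1 := by
    rw [← C_pow, ← C_1, ← C_add]
    congr 1
    rw [div_pow, one_pow, Real.sq_sqrt ha.le]
    field_simp
    ring
  rw [hc1, hc4, ← hc2]
  linear_combination (L ^ 4 * (C (Real.sqrt (α:ℝ)) * C (1 / Real.sqrt (α:ℝ)) + 1)
    + 2 * S * L ^ 2) * hc3
end

section
/- For any graph G = ([n], E) with n ≥ 1, the graph matrix M_G := α(G)(A_G + I) - J is copositive, i.e., a^T M_G a ≥ 0 for all a ∈ ℝ_{≥0}^n. Equivalently, the graph polynomial f_G = Σ_{i,j}(M_G)_{ij} x_i² x_j² is nonnegative on ℝⁿ. -/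
open Finset

lemma qf_expand {n : ℕ} (M : Matrix (Fin n) (Fin n) ℝ) (a d : Fin n → ℝ) (ε : ℝ) :
    ∑ i, ∑ j, M i j * (a i + ε * d i) * (a j + ε * d j)
      = (∑ i, ∑ j, M i j * a i * a j)
        + ε * (∑ i, ∑ j, M i j * (d i * a j + a i * d j))
        + ε ^ 2 * (∑ i, ∑ j, M i j * d i * d j) := by
  simp only [Finset.mul_sum, Finset.sum_add_distrib, ← Finset.sum_add_distrib]
  refine Finset.sum_congr rfl fun i _ => ?_
  refine Finset.sum_congr rfl fun j _ => ?_
  ring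

lemma sum_dvec {n : ℕ} (u v : Fin n) (f : Fin n → ℝ) :
    ∑ i, f i * ((if i = u then (1:ℝ) else 0) - (if i = v then 1 else 0)) = f u - f v := by
  simp [mul_sub, Finset.sum_sub_distrib, mul_ite]

lemma qf_decomp {n : ℕ} (G : SimpleGraph (Fin n)) [DecidableRel G.Adj] (t : ℝ)
    (a : Fin n → ℝ) :
    ∑ i, ∑ j, graphMatrix G t i j * a i * a j
      = t * (∑ i, ∑ j, (if G.Adj i j then (1:ℝ) else 0) * (a i * a j))
        + t * (∑ i, a i ^ 2) - (∑ i, a i) ^ 2 := by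
  have h : ∀ i j : Fin n, graphMatrix G t i j * a i * a j
      = t * ((if G.Adj i j then (1:ℝ) else 0) * (a i * a j))
        + t * ((if i = j then (1:ℝ) else 0) * (a i * a j)) - a i * a j := by
    intro i j; simp only [graphMatrix]; ring
  have h1 : (∑ i, ∑ j, (if i = j then (1:ℝ) else 0) * (a i * a j)) = ∑ i, a i ^ 2 := by
    refine Finset.sum_congr rfl fun i _ => ?_
    simp [Finset.sum_ite_eq, sq]
  have h2 : (∑ i : Fin n, ∑ j : Fin n, a i * a j) = (∑ i, a i) ^ 2 := by
    rw [sq, Finset.sum_mul]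
    exact Finset.sum_congr rfl fun i _ => (Finset.mul_sum _ _ _).symm
  simp_rw [h, Finset.sum_sub_distrib, Finset.sum_add_distrib, ← Finset.mul_sum]
  rw [← Finset.sum_mul, ← sq, h1]

-- base case: support is stable
lemma base_case {n : ℕ} (G : SimpleGraph (Fin n)) [DecidableRel G.Adj] (α : ℕ)
    (hα : IsStabilityNumber G α) (a : Fin n → ℝ) (ha : ∀ i, 0 ≤ a i)
    (hstab : IsStable G (Finset.univ.filter fun i => a i ≠ 0)) :
    0 ≤ ∑ i, ∑ j, graphMatrix G (α : ℝ) i j * a i * a j := by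
  set S := Finset.univ.filter fun i => a i ≠ 0 with hS
  rw [qf_decomp]
  have hsum : ∑ i, a i = ∑ i ∈ S, a i := by
    rw [hS]; exact (Finset.sum_filter_ne_zero _).symm
  have hsq : ∑ i, a i ^ 2 = ∑ i ∈ S, a i ^ 2 := by
    refine (Finset.sum_subset (Finset.filter_subset _ _) fun x _ hx => ?_).symm
    simp only [hS, Finset.mem_filter, Finset.mem_univ, true_and, not_not] at hx
    simp [hx]
  have hcs : (∑ i ∈ S, a i) ^ 2 ≤ (S.card : ℝ) * ∑ i ∈ S, a i ^ 2 :=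
    sq_sum_le_card_mul_sum_sq
  have hcard : (S.card : ℝ) ≤ (α : ℝ) := by exact_mod_cast hα.2 S hstab
  have hB : 0 ≤ ∑ i ∈ S, a i ^ 2 := Finset.sum_nonneg fun i _ => sq_nonneg _
  have hP : 0 ≤ ∑ i, ∑ j, (if G.Adj i j then (1:ℝ) else 0) * (a i * a j) := by
    refine Finset.sum_nonneg fun i _ => Finset.sum_nonneg fun j _ => ?_
    have := mul_nonneg (ha i) (ha j)
    split <;> simp [this]
  have hαnn : (0:ℝ) ≤ (α : ℝ) := Nat.cast_nonneg _
  rw [hsum, hsq]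
  nlinarith [mul_le_mul_of_nonneg_right hcard hB]

lemma key_lemma {n : ℕ} (G : SimpleGraph (Fin n)) [DecidableRel G.Adj] (α : ℕ)
    (hα : IsStabilityNumber G α) :
    ∀ k : ℕ, ∀ a : Fin n → ℝ, (∀ i, 0 ≤ a i) →
      (Finset.univ.filter fun i => a i ≠ 0).card ≤ k →
      0 ≤ ∑ i, ∑ j, graphMatrix G (α : ℝ) i j * a i * a j := by
  intro k
  induction k with
  | zero =>
    intro a ha hk
    refine base_case G α hα a ha ?_
    have : (Finset.univ.filter fun i => a i ≠ 0) = ∅ := Finset.card_eq_zero.mp (Nat.le_zero.mp hk)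
    rw [this]
    intro i hi
    simp at hi
  | succ k ih =>
    intro a ha hk
    by_cases hstab : IsStable G (Finset.univ.filter fun i => a i ≠ 0)
    · exact base_case G α hα a ha hstab
    · set S := Finset.univ.filter fun i => a i ≠ 0 with hSdef
      -- extract an edge inside the support, with nonnegative linear coefficient
      set L : Fin n → Fin n → ℝ := fun u v => ∑ i, ∑ j, graphMatrix G (α : ℝ) i j *
        (((if i = u then (1:ℝ) else 0) - (if i = v then 1 else 0)) * a j
          + a i * ((if j = u then (1:ℝ) else 0) - (if j = v then 1 else 0))) with hLdef
      obtain ⟨u, v, hu, hv, huv, hL⟩ :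
          ∃ u v, u ∈ S ∧ v ∈ S ∧ G.Adj u v ∧ 0 ≤ L u v := by
        simp only [IsStable, not_forall, not_not] at hstab
        obtain ⟨u, hu, v, hv, huv⟩ := hstab
        rcases le_total 0 (L u v) with h | h
        · exact ⟨u, v, hu, hv, huv, h⟩
        · refine ⟨v, u, hv, hu, huv.symm, ?_⟩
          have hneg : L v u + L u v = 0 := by
            simp only [hLdef]
            rw [← Finset.sum_add_distrib]
            refine Finset.sum_eq_zero fun i _ => ?_
            rw [← Finset.sum_add_distrib]
            refine Finset.sum_eq_zero fun j _ => ?_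
            ring
          linarith
      have hune : u ≠ v := G.ne_of_adj huv
      have hau : 0 < a u := by
        have := Finset.mem_filter.mp hu
        exact lt_of_le_of_ne (ha u) (Ne.symm this.2)
      set d : Fin n → ℝ := fun i => (if i = u then (1:ℝ) else 0) - (if i = v then 1 else 0)
        with hddef
      -- the quadratic coefficient vanishes
      have hD : ∑ i, ∑ j, graphMatrix G (α : ℝ) i j * d i * d j = 0 := by
        have h1 : ∀ i, ∑ j, graphMatrix G (α : ℝ) i j * d i * d j
            = (graphMatrix G (α : ℝ) i u - graphMatrix G (α : ℝ) i v) * d i := by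
          intro i
          simp only [hddef]
          rw [sum_dvec u v (fun j => graphMatrix G (α : ℝ) i j
            * ((if i = u then (1:ℝ) else 0) - (if i = v then 1 else 0)))]
          ring
        simp_rw [h1, hddef]
        rw [sum_dvec u v (fun i => graphMatrix G (α : ℝ) i u - graphMatrix G (α : ℝ) i v)]
        simp [graphMatrix, huv, huv.symm, hune, hune.symm, G.irrefl]
      -- the shifted vector
      set b : Fin n → ℝ := fun i => a i + (-(a u)) * d i with hbdef
      have hbu : b u = 0 := by simp [hbdef, hddef, hune]
      have hbv : b v = a v + a u := by simp [hbdef, hddef, hune.symm]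
      have hbelse : ∀ i, i ≠ u → i ≠ v → b i = a i := by
        intro i h1 h2; simp [hbdef, hddef, h1, h2]
      have hbnn : ∀ i, 0 ≤ b i := by
        intro i
        rcases eq_or_ne i u with rfl | h1
        · rw [hbu]
        rcases eq_or_ne i v with rfl | h2
        · rw [hbv]; have := ha i; linarith
        · rw [hbelse i h1 h2]; exact ha i
      have hsupp : (Finset.univ.filter fun i => b i ≠ 0) ⊆ S.erase u := by
        intro i hi
        simp only [Finset.mem_filter, Finset.mem_univ, true_and] at hi
        have hiu : i ≠ u := by rintro rfl; exact hi hbu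
        refine Finset.mem_erase.mpr ⟨hiu, ?_⟩
        rcases eq_or_ne i v with rfl | h2
        · exact hv
        · rw [hSdef]
          simp only [Finset.mem_filter, Finset.mem_univ, true_and]
          rw [hbelse i hiu h2] at hi
          exact hi
      have hcard : (Finset.univ.filter fun i => b i ≠ 0).card ≤ k := by
        have h1 := Finset.card_le_card hsupp
        have h2 : (S.erase u).card = S.card - 1 := Finset.card_erase_of_mem hu
        have h3 : 1 ≤ S.card := Finset.card_pos.mpr ⟨u, hu⟩
        omega
      have hQb := ih b hbnn hcard
      have hexp := qf_expand (graphMatrix G (α : ℝ)) a d (-(a u))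
      rw [hD, mul_zero, add_zero] at hexp
      have hLu : ∑ i, ∑ j, graphMatrix G (α : ℝ) i j * (d i * a j + a i * d j) = L u v := by
        simp only [hLdef, hddef]
      rw [hLu] at hexp
      have hQb' : ∑ i, ∑ j, graphMatrix G (α : ℝ) i j * b i * b j
          = (∑ i, ∑ j, graphMatrix G (α : ℝ) i j * a i * a j) + (-(a u)) * L u v := hexp
      nlinarith [mul_nonneg (le_of_lt hau) hL]

theorem graph_matrix_copositive {n : ℕ} (hn : 1 ≤ n)
    (G : SimpleGraph (Fin n)) [DecidableRel G.Adj] (α : ℕ)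
    (hα : IsStabilityNumber G α) :
    (∀ a : Fin n → ℝ, (∀ i, 0 ≤ a i) →
        0 ≤ ∑ i, ∑ j, graphMatrix G (α : ℝ) i j * a i * a j) ∧
      (∀ x : Fin n → ℝ,
        0 ≤ ∑ i, ∑ j, graphMatrix G (α : ℝ) i j * x i ^ 2 * x j ^ 2) := by
  constructor
  · intro a ha
    exact key_lemma G α hα _ a ha le_rfl
  · intro x
    exact key_lemma G α hα _ (fun i => x i ^ 2) (fun i => sq_nonneg _) le_rfl
end
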